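/- Let g : S¹ × [−1,1] → S¹ × [−1,1] be the involution g(z,s) = (conj(z), −s) of the annulus. Then the quotient topological space of S¹ × [−1,1] by the equivalence relation identifying (z,s) with g(z,s) is homeomorphic to the closed unit disk D² = {w ∈ ℂ : |w| ≤ 1}. (This realizes the annulus as the double cover of a disk branched over two points, as in the proof of Proposition 5 of the paper.) -/

import Mathlib

/-- The unit circle in the complex plane. -/
def S1 : Set ℂ := {z : ℂ | ‖z‖ = 1}

/-- The closed unit disk in the complex plane. -/
def D2 : Set ℂ := {w : ℂ | ‖w‖ ≤ 1}

/-- The involution `g(z,s) = (conj z, −s)` of the annulus `S¹ × [−1,1]`. -/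
def annulusInv (p : ↥(S1 ×ˢ Set.Icc (-1 : ℝ) 1)) : ↥(S1 ×ˢ Set.Icc (-1 : ℝ) 1) :=
  ⟨((starRingEnd ℂ) p.val.1, -p.val.2), by
    obtain ⟨h1, h2⟩ := p.property
    simp only [S1, Set.mem_prod, Set.mem_setOf_eq, Set.mem_Icc] at *
    exact ⟨by simp [h1], by constructor <;> linarith [h2.1, h2.2]⟩⟩

/-!
Write a point of the annulus as `ζ = eˢ z`, so that the annulus becomes the round annulus
`e⁻¹ ≤ |ζ| ≤ e` and the involution becomes `ζ ↦ ζ⁻¹`. The Joukowski map `J ζ = (ζ + ζ⁻¹) / 2`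
identifies exactly `ζ` with `ζ⁻¹`, and sends the circle `|ζ| = eˢ` onto the ellipse with
semi-axes `cosh s`, `sinh s` (the segment `[-1, 1]` for `s = 0`, with the two branch points `±1`).
These confocal ellipses fill the ellipse with semi-axes `cosh 1`, `sinh 1`, which a linear
rescaling maps onto `D²`. The induced continuous bijection from the compact quotient onto the
Hausdorff disk is a homeomorphism.
-/

open Complex ComplexConjugate Function

noncomputable def joukowski (ζ : ℂ) : ℂ := (ζ + ζ⁻¹) / 2

lemma joukowski_eq_joukowski_iff {ζ ξ : ℂ} (hζ : ζ ≠ 0) (hξ : ξ ≠ 0) :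
    joukowski ζ = joukowski ξ ↔ ξ = ζ ∨ ξ = ζ⁻¹ := by
  have key : joukowski ζ = joukowski ξ ↔ (ξ - ζ) * (ζ * ξ - 1) = 0 := by
    unfold joukowski
    constructor <;> intro h <;> field_simp at h ⊢ <;> linear_combination -h
  rw [key, mul_eq_zero, sub_eq_zero, sub_eq_zero, mul_eq_one_iff_inv_eq₀ hζ, @eq_comm _ ζ⁻¹]

lemma exists_ne_zero_joukowski_eq (w : ℂ) : ∃ ζ ≠ 0, joukowski ζ = w := by
  obtain ⟨d, hd⟩ := IsAlgClosed.exists_eq_mul_self (w ^ 2 - 1)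
  have hprod : (w + d) * (w - d) = 1 := by linear_combination hd
  refine ⟨w + d, left_ne_zero_of_mul_eq_one hprod, ?_⟩
  rw [joukowski, inv_eq_of_mul_eq_one_right hprod]
  ring

lemma exp_mul_inv {z : ℂ} (hz : ‖z‖ = 1) (s : ℝ) :
    ((Real.exp s : ℂ) * z)⁻¹ = Real.exp (-s) * conj z := by
  rw [mul_inv, inv_eq_conj hz, Real.exp_neg, ofReal_inv]

lemma eq_of_exp_mul_eq {z z' : ℂ} (hz : ‖z‖ = 1) (hz' : ‖z'‖ = 1) {s s' : ℝ}
    (h : (Real.exp s : ℂ) * z = Real.exp s' * z') : s = s' ∧ z = z' := by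
  have hs : s = s' := by
    simpa [hz, hz', Real.exp_pos, abs_of_pos] using congrArg norm h
  subst hs
  exact ⟨rfl, mul_left_cancel₀ (by simp) h⟩

lemma exists_exp_mul_eq {ζ : ℂ} (hζ : ζ ≠ 0) :
    ∃ z : ℂ, ‖z‖ = 1 ∧ ∃ s : ℝ, (Real.exp s : ℂ) * z = ζ := by
  have hn : (‖ζ‖ : ℂ) ≠ 0 := by simpa using hζ
  refine ⟨ζ / ‖ζ‖, by simp [hζ], Real.log ‖ζ‖, ?_⟩
  rw [Real.exp_log (norm_pos_iff.2 hζ)]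
  field_simp

lemma joukowski_exp_mul {z : ℂ} (hz : ‖z‖ = 1) (s : ℝ) :
    joukowski (Real.exp s * z) = ⟨Real.cosh s * z.re, Real.sinh s * z.im⟩ := by
  rw [joukowski, exp_mul_inv hz]
  apply Complex.ext <;>
    simp only [add_re, add_im, div_ofNat_re, div_ofNat_im, re_ofReal_mul, im_ofReal_mul,
      conj_re, conj_im, Real.cosh_eq, Real.sinh_eq] <;> ring

noncomputable def ellipseToDisk (w : ℂ) : ℂ := ⟨w.re / Real.cosh 1, w.im / Real.sinh 1⟩

lemma sinh_one_pos : 0 < Real.sinh 1 := Real.sinh_pos_iff.2 one_pos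

lemma ellipseToDisk_injective : Injective ellipseToDisk := by
  intro w w' h
  simp only [ellipseToDisk, Complex.ext_iff, div_left_inj' (Real.cosh_pos 1).ne',
    div_left_inj' sinh_one_pos.ne'] at h
  exact Complex.ext h.1 h.2

lemma ellipseToDisk_surjective : Surjective ellipseToDisk := fun w =>
  ⟨⟨w.re * Real.cosh 1, w.im * Real.sinh 1⟩,
    by simp [ellipseToDisk, (Real.cosh_pos 1).ne', sinh_one_pos.ne']⟩

lemma continuous_ellipseToDisk : Continuous ellipseToDisk :=
  equivRealProdCLM.symm.continuous.comp
    (f := fun w : ℂ => (w.re / Real.cosh 1, w.im / Real.sinh 1)) (by fun_prop)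

lemma norm_ellipseToDisk_joukowski_exp_mul_le_one_iff {z : ℂ} (hz : ‖z‖ = 1) (s : ℝ) :
    ‖ellipseToDisk (joukowski (Real.exp s * z))‖ ≤ 1 ↔ |s| ≤ 1 := by
  have hre_im : z.re ^ 2 + z.im ^ 2 = 1 := by
    have := Complex.sq_norm z
    rw [hz, normSq_apply] at this
    linarith
  have hc : 0 < z.re ^ 2 / Real.cosh 1 ^ 2 + z.im ^ 2 / Real.sinh 1 ^ 2 := by
    have := sinh_one_pos
    rcases lt_or_ge 0 (z.re ^ 2) with h | h
    · exact add_pos_of_pos_of_nonneg (div_pos h (by positivity)) (by positivity)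
    · exact add_pos_of_nonneg_of_pos (by positivity) (div_pos (by linarith) (by positivity))
  -- `cosh² - sinh²` is the same for `s` and `1`, so only `sinh² s - sinh² 1` survives
  have key : ‖ellipseToDisk (joukowski (Real.exp s * z))‖ ^ 2 - 1 =
      (Real.sinh s ^ 2 - Real.sinh 1 ^ 2) *
        (z.re ^ 2 / Real.cosh 1 ^ 2 + z.im ^ 2 / Real.sinh 1 ^ 2) := by
    rw [joukowski_exp_mul hz, ellipseToDisk, Complex.sq_norm, normSq_mk]
    field_simp
    linear_combination (z.re ^ 2 * Real.sinh 1 ^ 2) * Real.cosh_sq s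
      - (z.re ^ 2 * Real.sinh 1 ^ 2) * Real.cosh_sq 1 + (Real.sinh 1 ^ 2 * Real.cosh 1 ^ 2) * hre_im
  calc ‖ellipseToDisk (joukowski (Real.exp s * z))‖ ≤ 1
      ↔ Real.sinh s ^ 2 ≤ Real.sinh 1 ^ 2 := by
        rw [← sq_le_one_iff₀ (norm_nonneg _), ← sub_nonpos, key, ← sub_nonpos (b := _ ^ 2)]
        exact ⟨fun h => nonpos_of_mul_nonpos_left h hc,
          fun h => mul_nonpos_of_nonpos_of_nonneg h hc.le⟩
    _ ↔ |s| ≤ 1 := by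
        rw [sq_le_sq, Real.abs_sinh, abs_of_pos sinh_one_pos, Real.sinh_le_sinh]

lemma S1_eq_sphere : S1 = Metric.sphere (0 : ℂ) 1 := by
  ext z
  simp [S1]

instance : CompactSpace ↥(S1 ×ˢ Set.Icc (-1 : ℝ) 1) :=
  isCompact_iff_compactSpace.mp ((S1_eq_sphere ▸ isCompact_sphere 0 1).prod isCompact_Icc)

noncomputable def annulusExp (p : ↥(S1 ×ˢ Set.Icc (-1 : ℝ) 1)) : ℂ :=
  Real.exp p.val.2 * p.val.1

lemma annulusExp_ne_zero (p : ↥(S1 ×ˢ Set.Icc (-1 : ℝ) 1)) : annulusExp p ≠ 0 :=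
  mul_ne_zero (by simp) (norm_ne_zero_iff.1 (by rw [p.2.1]; exact one_ne_zero))

lemma annulusExp_annulusInv (p : ↥(S1 ×ˢ Set.Icc (-1 : ℝ) 1)) :
    annulusExp (annulusInv p) = (annulusExp p)⁻¹ :=
  (exp_mul_inv p.2.1 _).symm

lemma annulusExp_injective : Injective annulusExp := fun p q h => by
  obtain ⟨hs, hz⟩ := eq_of_exp_mul_eq p.2.1 q.2.1 h
  exact Subtype.ext (Prod.ext hz hs)

lemma continuous_annulusExp : Continuous annulusExp := by
  unfold annulusExp
  fun_prop

noncomputable def annulusToDisk (p : ↥(S1 ×ˢ Set.Icc (-1 : ℝ) 1)) : ↥D2 :=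
  ⟨ellipseToDisk (joukowski (annulusExp p)),
    (norm_ellipseToDisk_joukowski_exp_mul_le_one_iff p.2.1 _).2 (abs_le.2 p.2.2)⟩

lemma annulusToDisk_eq_iff (p q : ↥(S1 ×ˢ Set.Icc (-1 : ℝ) 1)) :
    annulusToDisk p = annulusToDisk q ↔ q = p ∨ q = annulusInv p := by
  refine (Subtype.ext_iff.trans ellipseToDisk_injective.eq_iff).trans ?_
  rw [joukowski_eq_joukowski_iff (annulusExp_ne_zero p) (annulusExp_ne_zero q),
    ← annulusExp_annulusInv, annulusExp_injective.eq_iff, annulusExp_injective.eq_iff]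

lemma annulusToDisk_surjective : Surjective annulusToDisk := by
  rintro ⟨w, hw⟩
  obtain ⟨u, rfl⟩ := ellipseToDisk_surjective w
  obtain ⟨ζ, hζ, rfl⟩ := exists_ne_zero_joukowski_eq u
  obtain ⟨z, hz, s, rfl⟩ := exists_exp_mul_eq hζ
  have hs := (norm_ellipseToDisk_joukowski_exp_mul_le_one_iff hz s).1 hw
  exact ⟨⟨(z, s), hz, abs_le.1 hs⟩, rfl⟩

lemma continuous_annulusToDisk : Continuous annulusToDisk := by
  have hJ : Continuous fun p => joukowski (annulusExp p) :=
    (continuous_annulusExp.add (continuous_annulusExp.inv₀ annulusExp_ne_zero)).div_const 2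
  exact (continuous_ellipseToDisk.comp hJ).subtype_mk _

theorem nonempty_quot_homeomorph_of_fibers {X Y : Type*} [TopologicalSpace X] [CompactSpace X]
    [TopologicalSpace Y] [T2Space Y] {σ : X → X} {f : X → Y} (hf : Continuous f)
    (hsurj : Surjective f) (hfib : ∀ a b, f a = f b ↔ b = a ∨ b = σ a) :
    Nonempty (Quot (fun a b => b = σ a) ≃ₜ Y) := by
  let F : Quot (fun a b => b = σ a) → Y := Quot.lift f fun a b h => (hfib a b).2 (Or.inr h)
  have hF : Bijective F := by
    refine ⟨fun qa qb h => ?_, (Quot.surjective_lift _).2 hsurj⟩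
    induction qa using Quot.ind
    induction qb using Quot.ind
    rcases (hfib _ _).1 h with rfl | h'
    · rfl
    · exact Quot.sound h'
  exact ⟨(continuous_quot_lift _ hf).homeoOfEquivCompactToT2 (f := Equiv.ofBijective F hF)⟩

/-- The quotient of the annulus `S¹ × [−1,1]` by the identification
`(z,s) ∼ g(z,s)` is homeomorphic to the closed unit disk `D²`. -/
theorem stmt9 :
    Nonempty (Quot (fun a b => b = annulusInv a) ≃ₜ ↥D2) :=
  nonempty_quot_homeomorph_of_fibers continuous_annulusToDisk annulusToDisk_surjective
    annulusToDisk_eq_iff
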